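/- For x → ±1 with ±Re(x) - 1 ≥ C·|Im(x)| for some fixed C > 0, the Bernstein-ellipse parameter α(x) = log|x + √(x²-1)| satisfies α(x) = Θ(√|x ∓ 1|). -/

import Mathlib

/-!
Write `s = (x² - 1)^(1/2)` for the principal square root, so that `(x + s)(x - s) = 1` and
`α(x) = log max(|x + s|, |x - s|) ≥ 0`. Near `x = 1`, `α(x) ≈ |x + s| - 1` is squeezed between
`Re s` and `|x - 1| + |s|`. Here `|s| = √|x² - 1| ≈ √(2|x - 1|)`, and in the half-plane
`Re x ≥ 1` (which contains the sector) also `2 (Re s)² = |x² - 1| + Re (x² - 1) ≳ 2|x - 1|`,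
because `Re (x² - 1) ≥ -(Im x)²` there. The endpoint `-1` follows from `α(-x) = α(x)`.
-/

/-- The Bernstein-ellipse parameter α(x) = log|x + √(x²-1)|, with the branch of
    the square root chosen so that |x + √(x²-1)| ≥ 1 (equivalently, the maximum
    of the two branch values, whose product has modulus 1). -/
noncomputable def bernsteinParam (x : ℂ) : ℝ :=
  Real.log (max (‖x + (x ^ 2 - 1) ^ ((1 : ℂ) / 2)‖)
    (‖x - (x ^ 2 - 1) ^ ((1 : ℂ) / 2)‖))

theorem Complex.norm_cpow_inv_two (z : ℂ) : ‖z ^ (2⁻¹ : ℂ)‖ = √‖z‖ := by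
  rw [Real.sqrt_eq_rpow, ← Complex.norm_cpow_real]
  norm_num

theorem Real.half_le_log_one_add {r : ℝ} (h0 : 0 ≤ r) (h1 : r ≤ 1) :
    r / 2 ≤ Real.log (1 + r) :=
  calc r / 2 ≤ 1 - (1 + r)⁻¹ := by
        rw [show 1 - (1 + r)⁻¹ = r / (1 + r) by field_simp; ring]
        exact div_le_div_of_nonneg_left h0 (by linarith) (by linarith)
    _ ≤ Real.log (1 + r) := Real.one_sub_inv_le_log_of_pos (by linarith)

theorem bernsteinParam_eq (x : ℂ) :
    bernsteinParam x =
      Real.log (max ‖x + (x ^ 2 - 1) ^ (2⁻¹ : ℂ)‖ ‖x - (x ^ 2 - 1) ^ (2⁻¹ : ℂ)‖) := by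
  rw [bernsteinParam, one_div]

theorem bernsteinParam_neg (x : ℂ) : bernsteinParam (-x) = bernsteinParam x := by
  have hadd : -x + (x ^ 2 - 1) ^ (2⁻¹ : ℂ) = -(x - (x ^ 2 - 1) ^ (2⁻¹ : ℂ)) := by ring
  have hsub : -x - (x ^ 2 - 1) ^ (2⁻¹ : ℂ) = -(x + (x ^ 2 - 1) ^ (2⁻¹ : ℂ)) := by ring
  rw [bernsteinParam_eq, bernsteinParam_eq, neg_sq, hadd, hsub, norm_neg, norm_neg, max_comm]

theorem one_le_max_norm_add_norm_sub_sqrt (x : ℂ) :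
    1 ≤ max ‖x + (x ^ 2 - 1) ^ (2⁻¹ : ℂ)‖ ‖x - (x ^ 2 - 1) ^ (2⁻¹ : ℂ)‖ := by
  set s := (x ^ 2 - 1) ^ (2⁻¹ : ℂ) with hs
  have hprod : ‖x + s‖ * ‖x - s‖ = 1 := by
    rw [← norm_mul, show (x + s) * (x - s) = x ^ 2 - s ^ 2 by ring, hs,
      Complex.cpow_ofNat_inv_pow, sub_sub_cancel, norm_one]
  by_contra! h
  obtain ⟨hplus, hminus⟩ := max_lt_iff.1 h
  nlinarith [norm_nonneg (x + s), norm_nonneg (x - s)]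

theorem bernsteinParam_le (x : ℂ) : bernsteinParam x ≤ ‖x‖ + √‖x ^ 2 - 1‖ - 1 := by
  rw [bernsteinParam_eq]
  refine (Real.log_le_sub_one_of_pos
    (one_pos.trans_le (one_le_max_norm_add_norm_sub_sqrt x))).trans (sub_le_sub_right ?_ 1)
  rw [← Complex.norm_cpow_inv_two]
  exact max_le (norm_add_le _ _) (norm_sub_le _ _)

theorem log_one_add_le_bernsteinParam {x : ℂ} (hx : 1 ≤ x.re) :
    Real.log (1 + √((‖x ^ 2 - 1‖ + (x ^ 2 - 1).re) / 2)) ≤ bernsteinParam x := by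
  rw [bernsteinParam_eq, ← Complex.cpow_inv_two_re]
  set s := (x ^ 2 - 1) ^ (2⁻¹ : ℂ)
  have hs : 0 ≤ s.re := by rw [Complex.cpow_inv_two_re]; positivity
  refine Real.log_le_log (by linarith) (le_max_of_le_left ?_)
  calc 1 + s.re ≤ (x + s).re := by rw [Complex.add_re]; linarith
    _ ≤ ‖x + s‖ := Complex.re_le_norm _

theorem norm_sq_sub_one_le (x : ℂ) : ‖x ^ 2 - 1‖ ≤ ‖x - 1‖ * (‖x - 1‖ + 2) := by
  rw [show x ^ 2 - 1 = (x - 1) * ((x - 1) + 2) by ring, norm_mul]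
  gcongr
  exact (norm_add_le _ _).trans_eq (by rw [Complex.norm_two])

theorem two_mul_mul_one_sub_le_norm_add_re {x : ℂ} (hx : 1 ≤ x.re) :
    2 * ‖x - 1‖ * (1 - ‖x - 1‖) ≤ ‖x ^ 2 - 1‖ + (x ^ 2 - 1).re := by
  set t := ‖x - 1‖
  have hnorm : t * (2 - t) ≤ ‖x ^ 2 - 1‖ := by
    have h2 : 2 - t ≤ ‖x + 1‖ := by
      have := norm_sub_le (x + 1) (x - 1)
      rw [show x + 1 - (x - 1) = 2 by ring, Complex.norm_two] at this
      linarith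
    rw [show x ^ 2 - 1 = (x - 1) * (x + 1) by ring, norm_mul]
    exact mul_le_mul_of_nonneg_left h2 (norm_nonneg _)
  have him : |x.im| ≤ t := by simpa using Complex.abs_im_le_norm (x - 1)
  have hre : -t ^ 2 ≤ (x ^ 2 - 1).re := by
    have : (x ^ 2 - 1).re = x.re ^ 2 - x.im ^ 2 - 1 := by simp [sq]
    nlinarith [sq_abs x.im, abs_nonneg x.im]
  nlinarith

theorem bernsteinParam_bounds_of_one_le_re {x : ℂ} (hx : 1 ≤ x.re) (ht : ‖x - 1‖ < 1 / 4) :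
    1 / 4 * √‖x - 1‖ ≤ bernsteinParam x ∧ bernsteinParam x ≤ 3 * √‖x - 1‖ := by
  set t := ‖x - 1‖
  have ht0 : 0 ≤ t := norm_nonneg _
  have hsqrt_t : √t ≤ 1 / 2 := by rw [Real.sqrt_le_left (by norm_num)]; linarith
  have hsqrt_z : √‖x ^ 2 - 1‖ ≤ 2 * √t := by
    refine (Real.sqrt_le_sqrt (norm_sq_sub_one_le x)).trans ?_
    rw [Real.sqrt_le_left (by positivity), mul_pow, Real.sq_sqrt ht0]
    nlinarith
  constructor
  · set r := √((‖x ^ 2 - 1‖ + (x ^ 2 - 1).re) / 2)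
    have hsum := two_mul_mul_one_sub_le_norm_add_re hx
    have hr_lower : √t / 2 ≤ r := by
      rw [Real.le_sqrt (by positivity) (by nlinarith), div_pow, Real.sq_sqrt ht0]
      nlinarith
    have hr_upper : r ≤ 1 := by
      have : r ≤ √‖x ^ 2 - 1‖ :=
        Real.sqrt_le_sqrt (by linarith [Complex.re_le_norm (x ^ 2 - 1)])
      linarith
    calc 1 / 4 * √t ≤ r / 2 := by linarith
      _ ≤ Real.log (1 + r) := Real.half_le_log_one_add (Real.sqrt_nonneg _) hr_upper
      _ ≤ bernsteinParam x := log_one_add_le_bernsteinParam hx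
  · have hx_norm : ‖x‖ ≤ 1 + t := by simpa using norm_le_norm_add_norm_sub' x 1
    have ht_le : t ≤ √t := by rw [Real.le_sqrt ht0 ht0]; nlinarith
    linarith [bernsteinParam_le x]

/-- For x → ±1 within the sector ±Re(x) - 1 ≥ C·|Im(x)|, the Bernstein-ellipse
    parameter satisfies α(x) = Θ(√|x ∓ 1|). -/
theorem bernsteinParam_endpoint_asymptotics (C : ℝ) (hC : 0 < C) :
    (∃ c C' ε : ℝ, 0 < c ∧ c ≤ C' ∧ 0 < ε ∧
      ∀ x : ℂ, ‖x - 1‖ < ε → x.re - 1 ≥ C * |x.im| →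
        c * Real.sqrt (‖x - 1‖) ≤ bernsteinParam x ∧
        bernsteinParam x ≤ C' * Real.sqrt (‖x - 1‖)) ∧
    (∃ c C' ε : ℝ, 0 < c ∧ c ≤ C' ∧ 0 < ε ∧
      ∀ x : ℂ, ‖x + 1‖ < ε → -x.re - 1 ≥ C * |x.im| →
        c * Real.sqrt (‖x + 1‖) ≤ bernsteinParam x ∧
        bernsteinParam x ≤ C' * Real.sqrt (‖x + 1‖)) := by
  have hsector {a b : ℝ} (h : a - 1 ≥ C * |b|) : 1 ≤ a := by nlinarith [abs_nonneg b]
  refine ⟨⟨1 / 4, 3, 1 / 4, by norm_num, by norm_num, by norm_num, fun x hx hx_sector =>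
    bernsteinParam_bounds_of_one_le_re (hsector hx_sector) hx⟩,
    ⟨1 / 4, 3, 1 / 4, by norm_num, by norm_num, by norm_num, fun x hx hx_sector => ?_⟩⟩
  have hnorm : ‖-x - 1‖ = ‖x + 1‖ := by rw [show -x - 1 = -(x + 1) by ring, norm_neg]
  rw [← bernsteinParam_neg, ← hnorm]
  exact bernsteinParam_bounds_of_one_le_re (hsector (b := (-x).im) (by simpa using hx_sector))
    (hnorm ▸ hx)
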